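/- arXiv:1709.10154 — 2 statements merged into one kernel-verified Lean document; each statement's English description precedes it below -/
import Mathlib

section
/- With the notation of the previous setting (A full row rank, G connected), if q ∈ image H̄' and there exists a generalized sign vector φ of q with H̄'P̄H̄φ = 0, then q = 0. -/
open Matrix

def IsIncidence {m mb : ℕ} (H : Matrix (Fin m) (Fin mb) ℝ) : Prop :=
  ∀ e, ∃ hd tl : Fin m, hd ≠ tl ∧
    ∀ i, H i e = if i = hd then 1 else if i = tl then -1 else 0

def IncGraph {m mb : ℕ} (H : Matrix (Fin m) (Fin mb) ℝ) : SimpleGraph (Fin m) :=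
  SimpleGraph.fromRel fun i j => ∃ e, H i e ≠ 0 ∧ H j e ≠ 0

def IsOrthProjKer {ni n : ℕ} (Ai : Matrix (Fin ni) (Fin n) ℝ)
    (P : Matrix (Fin n) (Fin n) ℝ) : Prop :=
  Pᵀ = P ∧ P * P = P ∧ ∀ v, P.mulVec v = v ↔ Ai.mulVec v = 0

/-- Generalized sign vector, blockwise version. -/
def IsGenSignB {a n : ℕ} (x q : Fin a → Fin n → ℝ) : Prop :=
  ∀ e k, (0 < x e k → q e k = 1) ∧ (x e k < 0 → q e k = -1) ∧ (x e k = 0 → |q e k| ≤ 1)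

/-! Put `z = H̄φ`. Pairing `H̄'P̄z = 0` with `φ` gives `‖P̄z‖² = 0`, so every block `z i` is
orthogonal to `ker A i`, i.e. a combination of the rows of `A i`. The columns of an incidence matrix
sum to zero, hence so do the blocks of `z`, and linear independence of the rows of all the `A i`
forces `z = 0`. Finally `‖q‖₁ = φ'q = φ'H̄'y = z'y = 0`. -/

theorem sum_dotProduct_sum_smul {ι ε n R : Type*} [Fintype ι] [Fintype ε] [Fintype n]
    [CommSemiring R] (H : Matrix ι ε R) (φ : ε → n → R) (x : ι → n → R) :
    ∑ e, φ e ⬝ᵥ ∑ i, H i e • x i = ∑ i, (∑ e, H i e • φ e) ⬝ᵥ x i := by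
  simp only [dotProduct_sum, sum_dotProduct, dotProduct_smul, smul_dotProduct]
  exact Finset.sum_comm

theorem dotProduct_mulVec_self_of_idempotent {n R : Type*} [Fintype n] [CommSemiring R]
    {P : Matrix n n R} (hPt : Pᵀ = P) (hPP : P * P = P) (v : n → R) :
    v ⬝ᵥ P *ᵥ v = P *ᵥ v ⬝ᵥ P *ᵥ v := by
  rw [dotProduct_mulVec (P *ᵥ v), ← mulVec_transpose, hPt, mulVec_mulVec, hPP, dotProduct_comm]

theorem mulVec_eq_zero_of_sum_dotProduct_mulVec_eq_zero {ι n : Type*} [Fintype ι] [Fintype n]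
    {P : ι → Matrix n n ℝ} (hPt : ∀ i, (P i)ᵀ = P i) (hPP : ∀ i, P i * P i = P i)
    {z : ι → n → ℝ} (h : ∑ i, z i ⬝ᵥ P i *ᵥ z i = 0) (i : ι) : P i *ᵥ z i = 0 := by
  simp only [dotProduct_mulVec_self_of_idempotent (hPt _) (hPP _)] at h
  have hnonneg (j : ι) : 0 ≤ P j *ᵥ z j ⬝ᵥ P j *ᵥ z j :=
    Finset.sum_nonneg fun k _ => mul_self_nonneg _
  exact dotProduct_self_eq_zero.1 <|
    (Finset.sum_eq_zero_iff_of_nonneg fun j _ => hnonneg j).1 h i (Finset.mem_univ i)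

theorem exists_eq_transpose_mulVec_of_forall_dotProduct_eq_zero {m n : Type*} [Fintype m]
    [Fintype n] (A : Matrix m n ℝ) (u : n → ℝ)
    (h : ∀ v, A *ᵥ v = 0 → u ⬝ᵥ v = 0) : ∃ w, u = Aᵀ *ᵥ w := by
  classical
  have hu : WithLp.toLp 2 u ∈ (toEuclideanLin A).kerᗮ := by
    rw [Submodule.mem_orthogonal']
    intro v hv
    rw [EuclideanSpace.inner_eq_star_dotProduct, star_trivial, dotProduct_comm]
    exact h _ (congrArg WithLp.ofLp hv)
  rw [LinearMap.orthogonal_ker, ← toEuclideanLin_conjTranspose_eq_adjoint] at hu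
  obtain ⟨w, hw⟩ := hu
  exact ⟨w.ofLp, by simpa using congrArg WithLp.ofLp hw.symm⟩

theorem eq_zero_of_sum_transpose_mulVec_eq_zero {ι n : Type*} [Fintype ι] [Fintype n]
    {κ : ι → Type*} [∀ i, Fintype (κ i)] {A : ∀ i, Matrix (κ i) n ℝ}
    (hA : LinearIndependent ℝ fun p : Σ i, κ i => A p.1 p.2) {w : ∀ i, κ i → ℝ}
    (h : ∑ i, (A i)ᵀ *ᵥ w i = 0) : w = 0 := by
  have := Fintype.linearIndependent_iff.1 hA (fun p => w p.1 p.2) ?_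
  · ext i k; exact this ⟨i, k⟩
  · rw [← Finset.univ_sigma_univ, Finset.sum_sigma]
    simpa only [mulVec_transpose, vecMul_eq_sum] using h

theorem IsIncidence.sum_apply_eq_zero {m mb : ℕ} {H : Matrix (Fin m) (Fin mb) ℝ}
    (hH : IsIncidence H) (e : Fin mb) : ∑ i, H i e = 0 := by
  obtain ⟨hd, tl, hne, hval⟩ := hH e
  simp [hval, Finset.sum_ite, Finset.filter_ne', Finset.filter_eq', hne.symm]

theorem IsIncidence.sum_sum_smul_eq_zero {m mb : ℕ} {H : Matrix (Fin m) (Fin mb) ℝ}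
    (hH : IsIncidence H) {M : Type*} [AddCommGroup M] [Module ℝ M] (x : Fin mb → M) :
    ∑ i, ∑ e, H i e • x e = 0 := by
  rw [Finset.sum_comm]
  simp [← Finset.sum_smul, hH.sum_apply_eq_zero]

theorem IsOrthProjKer.exists_eq_transpose_mulVec {ni n : ℕ} {A : Matrix (Fin ni) (Fin n) ℝ}
    {P : Matrix (Fin n) (Fin n) ℝ} (hP : IsOrthProjKer A P) {z : Fin n → ℝ}
    (hz : P *ᵥ z = 0) : ∃ w, z = Aᵀ *ᵥ w := by
  refine exists_eq_transpose_mulVec_of_forall_dotProduct_eq_zero A z fun v hv => ?_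
  rw [← (hP.2.2 v).2 hv, dotProduct_mulVec, ← mulVec_transpose, hP.1, hz, zero_dotProduct]

theorem IsGenSignB.mul_eq_abs {a n : ℕ} {q φ : Fin a → Fin n → ℝ} (hφ : IsGenSignB q φ)
    (e : Fin a) (k : Fin n) : φ e k * q e k = |q e k| := by
  obtain ⟨hpos, hneg, -⟩ := hφ e k
  rcases lt_trichotomy (q e k) 0 with h | h | h
  · rw [hneg h, abs_of_neg h, neg_one_mul]
  · rw [h, mul_zero, abs_zero]
  · rw [hpos h, abs_of_pos h, one_mul]

theorem IsGenSignB.eq_zero_of_sum_dotProduct_eq_zero {a n : ℕ} {q φ : Fin a → Fin n → ℝ}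
    (hφ : IsGenSignB q φ) (h : ∑ e, φ e ⬝ᵥ q e = 0) : q = 0 := by
  simp only [dotProduct, hφ.mul_eq_abs] at h
  rw [Finset.sum_eq_zero_iff_of_nonneg fun _ _ => Finset.sum_nonneg fun _ _ => abs_nonneg _] at h
  ext e k
  simpa using
    (Finset.sum_eq_zero_iff_of_nonneg fun _ _ => abs_nonneg _).1 (h e (Finset.mem_univ _)) k

theorem stmt_5_general {m mb n : ℕ} (ni : Fin m → ℕ)
    (A : ∀ i, Matrix (Fin (ni i)) (Fin n) ℝ)
    (hA : LinearIndependent ℝ (fun p : Σ i, Fin (ni i) => A p.1 p.2))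
    (P : Fin m → Matrix (Fin n) (Fin n) ℝ)
    (hP : ∀ i, IsOrthProjKer (A i) (P i))
    (H : Matrix (Fin m) (Fin mb) ℝ) (hH : IsIncidence H)
    (q : Fin mb → Fin n → ℝ)
    (hq : ∃ y : Fin m → Fin n → ℝ, ∀ e, q e = ∑ i, H i e • y i)
    (φ : Fin mb → Fin n → ℝ) (hφ : IsGenSignB q φ)
    (hMφ : ∀ e, ∑ i, H i e • (P i).mulVec (∑ e', H i e' • φ e') = 0) :
    q = 0 := by
  obtain ⟨y, hy⟩ := hq
  set z : Fin m → Fin n → ℝ := fun i => ∑ e, H i e • φ e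
  have hPz : ∀ i, P i *ᵥ z i = 0 := by
    refine mulVec_eq_zero_of_sum_dotProduct_mulVec_eq_zero (fun i => (hP i).1)
      (fun i => (hP i).2.1) ?_
    simp only [z, ← sum_dotProduct_sum_smul, hMφ, dotProduct_zero, Finset.sum_const_zero]
  choose w hw using fun i => (hP i).exists_eq_transpose_mulVec (hPz i)
  have hw0 : w = 0 := by
    refine eq_zero_of_sum_transpose_mulVec_eq_zero hA ?_
    simpa only [← hw] using hH.sum_sum_smul_eq_zero φ
  refine hφ.eq_zero_of_sum_dotProduct_eq_zero ?_
  calc ∑ e, φ e ⬝ᵥ q e = ∑ i, z i ⬝ᵥ y i := by simp only [hy, sum_dotProduct_sum_smul, z]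
    _ = 0 := by simp [hw, hw0]

/-- In the setting of connected `G` and full row rank `A`: if `q ∈ image H̄'`
(blockwise `q e = ∑ i, H i e • y i`) and some generalized sign vector `φ` of `q`
satisfies `H̄'P̄H̄ φ = 0`, then `q = 0`. -/
theorem stmt_5 {m mb n : ℕ} (ni : Fin m → ℕ)
    (A : ∀ i, Matrix (Fin (ni i)) (Fin n) ℝ)
    (hA : LinearIndependent ℝ (fun p : Σ i, Fin (ni i) => A p.1 p.2))
    (P : Fin m → Matrix (Fin n) (Fin n) ℝ)
    (hP : ∀ i, IsOrthProjKer (A i) (P i))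
    (H : Matrix (Fin m) (Fin mb) ℝ) (hH : IsIncidence H)
    (hconn : (IncGraph H).Connected)
    (q : Fin mb → Fin n → ℝ)
    (hq : ∃ y : Fin m → Fin n → ℝ, ∀ e, q e = ∑ i, H i e • y i)
    (φ : Fin mb → Fin n → ℝ) (hφ : IsGenSignB q φ)
    (hMφ : ∀ e, ∑ i, H i e • (P i).mulVec (∑ e', H i e' • φ e') = 0) :
    q = 0 :=
  stmt_5_general ni A hA P hP H hH q hq φ hφ hMφ
end

section
/- Let M be positive semidefinite with Φ_c(M) nonempty and λ(M) = min_{φ∈Λ(M)} φ'Mφ > 0. Let x be an absolutely continuous solution of x'(t) = -Mγ(t) with γ(t) a generalized sign vector of x(t). Then there exists a finite time T ≤ ‖x(0)‖₁/λ(M) such that x(T) ∈ Φ(M), i.e. some generalized sign vector φ of x(T) satisfies Mφ = 0. -/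
open Matrix MeasureTheory

def IsGenSign {r : ℕ} (x q : Fin r → ℝ) : Prop :=
  ∀ k, (0 < x k → q k = 1) ∧ (x k < 0 → q k = -1) ∧ (x k = 0 → |q k| ≤ 1)

open Set Filter

/-!
Along the trajectory, `f t = ∑ k, |x t k|` is absolutely continuous, and since `γ t` is a
subgradient of the `ℓ¹` norm at `x t`, wherever `f` and `x` are differentiable we get
`f' t = γ t ⬝ x' t = -(γ t)ᵀ M γ t`. If `x t` stayed in `Φ_c(M)` up to `T = f 0 / λ`, this
would be `≤ -λ` almost everywhere on `[0, T]`, so `f T ≤ f 0 - λ T = 0`; but then `x T = 0`,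
and `φ = 0` is a generalized sign vector of `x T` with `M φ = 0`.
-/

namespace IsGenSign

variable {r : ℕ} {x q : Fin r → ℝ}

lemma abs_le (h : IsGenSign x q) (k : Fin r) : |q k| ≤ 1 := by
  rcases lt_trichotomy (x k) 0 with hx | hx | hx
  · simp [(h k).2.1 hx]
  · exact (h k).2.2 hx
  · simp [(h k).1 hx]

lemma mul_eq_abs (h : IsGenSign x q) (k : Fin r) : q k * x k = |x k| := by
  rcases lt_trichotomy (x k) 0 with hx | hx | hx
  · simp [(h k).2.1 hx, abs_of_neg hx]
  · simp [hx]
  · simp [(h k).1 hx, abs_of_pos hx]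

lemma sum_mul_self_eq (h : IsGenSign x q) : ∑ k, q k * x k = ∑ k, |x k| :=
  Finset.sum_congr rfl fun k _ => h.mul_eq_abs k

lemma sum_mul_le (h : IsGenSign x q) (y : Fin r → ℝ) : ∑ k, q k * y k ≤ ∑ k, |y k| :=
  Finset.sum_le_sum fun k _ => calc
    q k * y k ≤ |q k| * |y k| := by rw [← abs_mul]; exact le_abs_self _
    _ ≤ |y k| := mul_le_of_le_one_left (abs_nonneg _) (h.abs_le k)

lemma zero : IsGenSign (0 : Fin r → ℝ) 0 := fun _ => by simp

lemma eq_sum_mul_of_hasDerivAt_sum_abs {x : ℝ → Fin r → ℝ} {x' : Fin r → ℝ} {t d : ℝ}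
    (hq : IsGenSign (x t) q) (hx : HasDerivAt x x' t)
    (hd : HasDerivAt (fun s => ∑ k, |x s k|) d t) : d = ∑ k, q k * x' k := by
  have hmin : IsLocalMin (fun s => ∑ k, |x s k| - ∑ k, q k * x s k) t :=
    Eventually.of_forall fun s => by
      simpa [hq.sum_mul_self_eq] using hq.sum_mul_le (x s)
  have hlin : HasDerivAt (fun s => ∑ k, q k * x s k) (∑ k, q k * x' k) t :=
    HasDerivAt.fun_sum fun k _ => (hasDerivAt_pi.1 hx k).const_mul (q k)
  exact sub_eq_zero.1 (hmin.hasDerivAt_eq_zero (hd.sub hlin))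

end IsGenSign

namespace AbsolutelyContinuousOnInterval

variable {a b : ℝ}

lemma const {X : Type*} [PseudoMetricSpace X] (c : X) :
    AbsolutelyContinuousOnInterval (fun _ => c) a b := by
  simp [AbsolutelyContinuousOnInterval, tendsto_const_nhds]

lemma congr {X : Type*} [PseudoMetricSpace X] {f g : ℝ → X}
    (hf : AbsolutelyContinuousOnInterval f a b) (hfg : EqOn f g (uIcc a b)) :
    AbsolutelyContinuousOnInterval g a b := by
  refine (tendsto_congr' ?_).1 hf
  refine eventually_inf_principal.2 (Eventually.of_forall fun E hE => ?_)
  exact Finset.sum_congr rfl fun i hi => by rw [hfg (hE.1 i hi).1, hfg (hE.1 i hi).2]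

lemma _root_.LipschitzWith.comp_absolutelyContinuousOnInterval {X Y : Type*}
    [PseudoMetricSpace X] [PseudoMetricSpace Y] {K : NNReal} {g : X → Y} {f : ℝ → X}
    (hg : LipschitzWith K g) (hf : AbsolutelyContinuousOnInterval f a b) :
    AbsolutelyContinuousOnInterval (g ∘ f) a b := by
  unfold AbsolutelyContinuousOnInterval at hf ⊢
  refine squeeze_zero (fun _ => Finset.sum_nonneg fun _ _ => dist_nonneg) (fun E => ?_)
    (by simpa using hf.const_mul (K : ℝ))
  rw [Finset.mul_sum]
  exact Finset.sum_le_sum fun i _ => hg.dist_le_mul _ _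

lemma finset_sum {ι F : Type*} [SeminormedAddCommGroup F] {s : Finset ι} {f : ι → ℝ → F}
    (hf : ∀ i ∈ s, AbsolutelyContinuousOnInterval (f i) a b) :
    AbsolutelyContinuousOnInterval (fun t => ∑ i ∈ s, f i t) a b := by
  classical
  induction s using Finset.induction_on with
  | empty => simpa using const 0
  | insert i s hi ih =>
    simp only [Finset.sum_insert hi]
    exact (hf i (s.mem_insert_self i)).add (ih fun j hj => hf j (Finset.mem_insert_of_mem hj))

lemma of_eq_add_integral {f g : ℝ → ℝ} (hg : IntervalIntegrable g volume a b)
    (hf : ∀ t ∈ uIcc a b, f t = f a + ∫ s in a..t, g s) :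
    AbsolutelyContinuousOnInterval f a b :=
  ((const (f a)).add (hg.absolutelyContinuousOnInterval_intervalIntegral left_mem_uIcc)).congr
    fun t ht => (hf t ht).symm

lemma apply_of_eq_add_integral {ι : Type*} [Fintype ι] {f g : ℝ → ι → ℝ}
    (hg : IntervalIntegrable g volume a b) (hf : ∀ t ∈ uIcc a b, f t = f a + ∫ s in a..t, g s)
    (k : ι) : AbsolutelyContinuousOnInterval (fun t => f t k) a b := by
  refine of_eq_add_integral (g := fun s => g s k) ⟨hg.1.eval k, hg.2.eval k⟩ fun t ht => ?_
  have hproj := (ContinuousLinearMap.proj (R := ℝ) (φ := fun _ : ι => ℝ) k)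
    |>.intervalIntegral_comp_comm (hg.mono_set (uIcc_subset_uIcc_left ht))
  rw [hf t ht, Pi.add_apply]
  exact congrArg _ hproj.symm

lemma sum_abs {ι : Type*} [Fintype ι] {x : ℝ → ι → ℝ}
    (hx : ∀ k, AbsolutelyContinuousOnInterval (fun t => x t k) a b) :
    AbsolutelyContinuousOnInterval (fun t => ∑ k, |x t k|) a b :=
  finset_sum fun k _ =>
    (lipschitzWith_one_norm (E := ℝ)).comp_absolutelyContinuousOnInterval (hx k)

lemma sub_le_of_hasDerivAt_le {f : ℝ → ℝ} {c : ℝ} (hab : a ≤ b)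
    (hf : AbsolutelyContinuousOnInterval f a b)
    (hderiv : ∀ᵐ t, t ∈ Ioo a b → ∀ d, HasDerivAt f d t → d ≤ c) :
    f b - f a ≤ c * (b - a) := by
  have hle : deriv f ≤ᵐ[volume.restrict (Icc a b)] fun _ => c := by
    rw [EventuallyLE, Measure.restrict_congr_set Ioo_ae_eq_Icc.symm,
      ae_restrict_iff' measurableSet_Ioo]
    filter_upwards [hf.ae_differentiableAt, hderiv] with t hdiff hle ht
    exact hle ht _ (hdiff (Ioo_subset_Icc_self.trans Icc_subset_uIcc ht)).hasDerivAt
  calc f b - f a = ∫ t in a..b, deriv f t := hf.integral_deriv_eq_sub.symm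
    _ ≤ ∫ _ in a..b, c :=
      intervalIntegral.integral_mono_ae_restrict hab hf.intervalIntegrable_deriv
        intervalIntegrable_const hle
    _ = c * (b - a) := by simp [mul_comm]

end AbsolutelyContinuousOnInterval

lemma ae_hasDerivAt_of_eq_add_integral {E : Type*} [NormedAddCommGroup E] [NormedSpace ℝ E]
    [CompleteSpace E] {f g : ℝ → E} {a b : ℝ} (hg : IntervalIntegrable g volume a b)
    (hf : ∀ t ∈ Icc a b, f t = f a + ∫ s in a..t, g s) :
    ∀ᵐ t, t ∈ Ioo a b → HasDerivAt f (g t) t := by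
  filter_upwards [hg.ae_hasDerivAt_integral] with t ht htab
  have htab' : t ∈ uIcc a b := Icc_subset_uIcc (Ioo_subset_Icc_self htab)
  refine ((ht htab' a left_mem_uIcc).const_add (f a)).congr_of_eventuallyEq ?_
  filter_upwards [Icc_mem_nhds htab.1 htab.2] with s hs using hf s hs

theorem stmt_11_general {r : ℕ} (M : Matrix (Fin r) (Fin r) ℝ)
    (lam : ℝ)
    (hlam : IsLeast {v : ℝ | ∃ φ q : Fin r → ℝ,
      (∀ ψ, IsGenSign q ψ → M.mulVec ψ ≠ 0) ∧ IsGenSign q φ ∧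
      v = ∑ k, φ k * M.mulVec φ k} lam)
    (hlampos : 0 < lam)
    (x γ : ℝ → Fin r → ℝ)
    (hγ : ∀ t, IsGenSign (x t) (γ t))
    (hInt : ∀ t : ℝ, IntervalIntegrable (fun s => -(M.mulVec (γ s))) volume 0 t)
    (hAC : ∀ t ≥ (0:ℝ), x t = x 0 + ∫ s in (0:ℝ)..t, -(M.mulVec (γ s))) :
    ∃ T : ℝ, 0 ≤ T ∧ T ≤ (∑ k, |x 0 k|) / lam ∧
      ∃ φ : Fin r → ℝ, IsGenSign (x T) φ ∧ M.mulVec φ = 0 := by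
  by_contra! hcon
  set T := (∑ k, |x 0 k|) / lam
  have hT0 : 0 ≤ T := by positivity
  have hx : ∀ t ∈ Icc 0 T, x t = x 0 + ∫ s in (0:ℝ)..t, -(M.mulVec (γ s)) :=
    fun t ht => hAC t ht.1
  have hac : AbsolutelyContinuousOnInterval (fun t => ∑ k, |x t k|) 0 T :=
    .sum_abs (.apply_of_eq_add_integral (hInt T) (uIcc_of_le hT0 ▸ hx))
  have hderiv : ∀ᵐ t, t ∈ Ioo 0 T →
      ∀ d, HasDerivAt (fun t => ∑ k, |x t k|) d t → d ≤ -lam := by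
    filter_upwards [ae_hasDerivAt_of_eq_add_integral (hInt T) hx] with t hxt ht d hd
    -- `x t ∈ Φ_c(M)`, so `γ t ∈ Λ(M)`
    have hquad := hlam.2 ⟨γ t, x t, hcon t ht.1.le ht.2.le, hγ t, rfl⟩
    rw [(hγ t).eq_sum_mul_of_hasDerivAt_sum_abs (hxt ht) hd]
    simpa using hquad
  have hdecay := hac.sub_le_of_hasDerivAt_le hT0 hderiv
  have hxT : x T = 0 := by
    have hsum : ∑ k, |x T k| = 0 := by
      refine le_antisymm ?_ (Finset.sum_nonneg fun k _ => abs_nonneg _)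
      have hlamT : lam * T = ∑ k, |x 0 k| := mul_div_cancel₀ _ hlampos.ne'
      linarith
    funext k
    simpa using (Finset.sum_eq_zero_iff_of_nonneg fun k _ => abs_nonneg (x T k)).1 hsum k
  exact hcon T hT0 le_rfl 0 (by rw [hxT]; exact IsGenSign.zero) (mulVec_zero M)

/-- Let `M` be PSD with `Φc(M)` nonempty and `lam = min_{φ ∈ Λ(M)} φ'Mφ > 0`
(`IsLeast` encodes both the minimum property and nonemptiness of `Λ(M)`, hence of
`Φc(M)`). For an absolutely continuous solution of `x' = -Mγ` with `γ(t)` a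
generalized sign vector of `x(t)`, there is a finite time `T ≤ ‖x(0)‖₁ / lam`
with `x(T) ∈ Φ(M)`, i.e. some generalized sign vector `φ` of `x(T)` has `Mφ = 0`. -/
theorem stmt_11 {r : ℕ} (M : Matrix (Fin r) (Fin r) ℝ) (hM : M.PosSemidef)
    (lam : ℝ)
    (hlam : IsLeast {v : ℝ | ∃ φ q : Fin r → ℝ,
      (∀ ψ, IsGenSign q ψ → M.mulVec ψ ≠ 0) ∧ IsGenSign q φ ∧
      v = ∑ k, φ k * M.mulVec φ k} lam)
    (hlampos : 0 < lam)
    (x γ : ℝ → Fin r → ℝ)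
    (hγ : ∀ t, IsGenSign (x t) (γ t))
    (hInt : ∀ t : ℝ, IntervalIntegrable (fun s => -(M.mulVec (γ s))) volume 0 t)
    (hAC : ∀ t ≥ (0:ℝ), x t = x 0 + ∫ s in (0:ℝ)..t, -(M.mulVec (γ s))) :
    ∃ T : ℝ, 0 ≤ T ∧ T ≤ (∑ k, |x 0 k|) / lam ∧
      ∃ φ : Fin r → ℝ, IsGenSign (x T) φ ∧ M.mulVec φ = 0 :=
  stmt_11_general M lam hlam hlampos x γ hγ hInt hAC
end
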